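/- Let d ≥ 2 and ξ ∈ [0,1]. Consider the CHSH marginal model P_ξ(·,·|x,y) on (ℤ/d) × (ℤ/d) given by P_ξ = ξ·P^PR_d + (1−ξ)·P^c_d, where P^PR_d(a,b|x,y) = 1/d if a − b ≡ xy (mod d) and 0 otherwise, and P^c_d(a,b|x,y) = 1/d if a = b and 0 otherwise (x,y ∈ {0,1}). Then CHSH_E(P_ξ) = h(ξ) = −ξ log₂ ξ − (1−ξ) log₂(1−ξ); in particular CHSH_E does not depend on d, and P_ξ violates the entropic CHSH inequality CHSH_E ≤ 0 for every ξ ∈ (0,1). -/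
import Mathlib


/-- Shannon entropy (in bits) of a finitely supported weight function,
with the convention `0 * logb 2 0 = 0` (automatic since `Real.logb 2 0 = 0`). -/
noncomputable def shannonEntropy {β : Type*} [Fintype β] (q : β → ℝ) : ℝ :=
  -∑ b, q b * Real.logb 2 (q b)

/-- Joint Shannon entropy of a bipartite outcome distribution. -/
noncomputable def pairEntropy {β γ : Type*} [Fintype β] [Fintype γ] (q : β → γ → ℝ) : ℝ :=
  -∑ b, ∑ c, q b c * Real.logb 2 (q b c)

/-- First-component marginal of a bipartite outcome distribution. -/
noncomputable def margFst {β γ : Type*} [Fintype γ] (q : β → γ → ℝ) : β → ℝ :=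
  fun b => ∑ c, q b c

/-- Second-component marginal of a bipartite outcome distribution. -/
noncomputable def margSnd {β γ : Type*} [Fintype β] (q : β → γ → ℝ) : γ → ℝ :=
  fun c => ∑ b, q b c

/-- The entropic CHSH expression
`CHSH_E = H(A₁B₁) + H(A₀) + H(B₀) − H(A₀B₀) − H(A₀B₁) − H(A₁B₀)`
of a CHSH box `P x y a b = P(a,b|x,y)`. -/
noncomputable def CHSHE {β γ : Type*} [Fintype β] [Fintype γ]
    (P : Fin 2 → Fin 2 → β → γ → ℝ) : ℝ :=
  pairEntropy (P 1 1) + shannonEntropy (margFst (P 0 0)) + shannonEntropy (margSnd (P 0 0))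
    - pairEntropy (P 0 0) - pairEntropy (P 0 1) - pairEntropy (P 1 0)

/-- The binary entropy `h(t) = −t log₂ t − (1−t) log₂ (1−t)`. -/
noncomputable def binEnt (t : ℝ) : ℝ :=
  -t * Real.logb 2 t - (1 - t) * Real.logb 2 (1 - t)

/-- The generalized PR box with `d` outcomes:
`P^PR_d(a,b|x,y) = 1/d` if `a − b ≡ xy (mod d)`, and `0` otherwise. -/
noncomputable def PPRd (d : ℕ) [NeZero d] : Fin 2 → Fin 2 → ZMod d → ZMod d → ℝ :=
  fun x y a b => if a - b = ((x.val * y.val : ℕ) : ZMod d) then (d : ℝ)⁻¹ else 0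

/-- The classically correlated box with `d` outcomes:
`P^c_d(a,b|x,y) = 1/d` if `a = b`, and `0` otherwise. -/
noncomputable def Pcd (d : ℕ) [NeZero d] : Fin 2 → Fin 2 → ZMod d → ZMod d → ℝ :=
  fun _ _ a b => if a = b then (d : ℝ)⁻¹ else 0

/-- The mixture `P_ξ = ξ·P^PR_d + (1−ξ)·P^c_d`. -/
noncomputable def Pmix (d : ℕ) [NeZero d] (ξ : ℝ) :
    Fin 2 → Fin 2 → ZMod d → ZMod d → ℝ :=
  fun x y a b => ξ * PPRd d x y a b + (1 - ξ) * Pcd d x y a b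

lemma diag_pairEntropy (d : ℕ) [NeZero d] :
    pairEntropy (fun a b : ZMod d => if a = b then (d:ℝ)⁻¹ else 0) = Real.logb 2 d := by
  have hd : (d:ℝ) ≠ 0 := Nat.cast_ne_zero.mpr (NeZero.ne d)
  unfold pairEntropy
  have h1 : ∀ a : ZMod d,
      ∑ b, (if a = b then (d:ℝ)⁻¹ else 0) * Real.logb 2 (if a = b then (d:ℝ)⁻¹ else 0)
        = (d:ℝ)⁻¹ * Real.logb 2 (d:ℝ)⁻¹ := by
    intro a
    have : ∀ b : ZMod d,
        (if a = b then (d:ℝ)⁻¹ else 0) * Real.logb 2 (if a = b then (d:ℝ)⁻¹ else 0)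
          = if a = b then (d:ℝ)⁻¹ * Real.logb 2 (d:ℝ)⁻¹ else 0 := by
      intro b; split_ifs <;> simp
    simp only [this, Finset.sum_ite_eq, Finset.mem_univ, if_true]
  simp only [h1, Finset.sum_const, Finset.card_univ, ZMod.card, nsmul_eq_mul]
  rw [Real.logb_inv]
  field_simp

lemma const_shannonEntropy (d : ℕ) [NeZero d] :
    shannonEntropy (fun _ : ZMod d => (d:ℝ)⁻¹) = Real.logb 2 d := by
  have hd : (d:ℝ) ≠ 0 := Nat.cast_ne_zero.mpr (NeZero.ne d)
  unfold shannonEntropy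
  simp only [Finset.sum_const, Finset.card_univ, ZMod.card, nsmul_eq_mul]
  rw [Real.logb_inv]
  field_simp

/-- For `d ≥ 2` and `ξ ∈ [0,1]`, the box `P_ξ = ξ·P^PR_d + (1−ξ)·P^c_d` satisfies
`CHSH_E(P_ξ) = h(ξ)`, independently of `d`; in particular it violates the entropic
CHSH inequality `CHSH_E ≤ 0` for every `ξ ∈ (0,1)`. -/
theorem Pmix_CHSHE (d : ℕ) [NeZero d] (hd : 2 ≤ d) (ξ : ℝ) (hξ0 : 0 ≤ ξ) (hξ1 : ξ ≤ 1) :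
    CHSHE (Pmix d ξ) = binEnt ξ ∧ (0 < ξ → ξ < 1 → 0 < CHSHE (Pmix d ξ)) := by
  haveI : Fact (1 < d) := ⟨hd⟩
  have hdR : (d:ℝ) ≠ 0 := Nat.cast_ne_zero.mpr (NeZero.ne d)
  have hone : (1 : ZMod d) ≠ 0 := one_ne_zero
  -- off-diagonal settings give the diagonal box
  have hoff : ∀ x y : Fin 2, x.val * y.val = 0 →
      Pmix d ξ x y = fun a b : ZMod d => if a = b then (d:ℝ)⁻¹ else 0 := by
    intro x y h
    funext a b
    simp only [Pmix, PPRd, Pcd, h, Nat.cast_zero, sub_eq_zero]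
    split_ifs <;> ring
  have h00 := hoff 0 0 rfl
  have h01 := hoff 0 1 rfl
  have h10 := hoff 1 0 rfl
  -- the (1,1) box
  have hsub : ∀ a b : ZMod d, a - b = 1 ↔ b = a - 1 := by
    intro a b
    constructor <;> intro h
    · rw [← h]; ring
    · rw [h]; ring
  have hne : ∀ a : ZMod d, a - 1 ≠ a := by
    intro a h
    exact hone (sub_eq_self.mp h)
  have h11 : Pmix d ξ 1 1 = fun a b : ZMod d =>
      if b = a - 1 then ξ * (d:ℝ)⁻¹ else if a = b then (1 - ξ) * (d:ℝ)⁻¹ else 0 := by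
    funext a b
    simp only [Pmix, PPRd, Pcd, Fin.val_one, Nat.mul_one, Nat.cast_one, hsub]
    by_cases hb1 : b = a - 1
    · have h' : ¬ a = a - 1 := fun h => hne a h.symm
      subst hb1
      simp [h']
    · by_cases hb2 : a = b
      · subst hb2
        simp [hb1]
      · simp [hb1, hb2]
  -- entropy of the (1,1) box
  have key : ∀ t : ℝ, (t * (d:ℝ)⁻¹) * Real.logb 2 (t * (d:ℝ)⁻¹)
      = (d:ℝ)⁻¹ * (t * Real.logb 2 t - t * Real.logb 2 d) := by
    intro t
    rcases eq_or_ne t 0 with h | h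
    · simp [h]
    · rw [Real.logb_mul h (inv_ne_zero hdR), Real.logb_inv]; ring
  have hpe11 : pairEntropy (Pmix d ξ 1 1) = binEnt ξ + Real.logb 2 d := by
    rw [h11]
    unfold pairEntropy
    have hinner : ∀ a : ZMod d,
        ∑ b, (if b = a - 1 then ξ * (d:ℝ)⁻¹ else if a = b then (1 - ξ) * (d:ℝ)⁻¹ else 0) *
          Real.logb 2 (if b = a - 1 then ξ * (d:ℝ)⁻¹ else if a = b then (1-ξ) * (d:ℝ)⁻¹ else 0)
        = (ξ * (d:ℝ)⁻¹) * Real.logb 2 (ξ * (d:ℝ)⁻¹)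
          + ((1-ξ) * (d:ℝ)⁻¹) * Real.logb 2 ((1-ξ) * (d:ℝ)⁻¹) := by
      intro a
      have hpt : ∀ b : ZMod d,
          (if b = a - 1 then ξ * (d:ℝ)⁻¹ else if a = b then (1 - ξ) * (d:ℝ)⁻¹ else 0) *
            Real.logb 2 (if b = a - 1 then ξ * (d:ℝ)⁻¹ else if a = b then (1-ξ) * (d:ℝ)⁻¹ else 0)
          = (if b = a - 1 then (ξ * (d:ℝ)⁻¹) * Real.logb 2 (ξ * (d:ℝ)⁻¹) else 0)
            + (if a = b then ((1-ξ) * (d:ℝ)⁻¹) * Real.logb 2 ((1-ξ) * (d:ℝ)⁻¹) else 0) := by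
        intro b
        by_cases hb1 : b = a - 1
        · have h' : ¬ a = a - 1 := fun h => hne a h.symm
          subst hb1
          simp [h']
        · by_cases hb2 : a = b
          · subst hb2
            simp [hb1]
          · simp [hb1, hb2]
      simp only [hpt, Finset.sum_add_distrib, Finset.sum_ite_eq', Finset.sum_ite_eq, Finset.mem_univ, if_true]
    simp only [hinner, Finset.sum_const, Finset.card_univ, ZMod.card, nsmul_eq_mul, key]
    unfold binEnt
    field_simp
    ring
  have hmf : margFst (Pmix d ξ 0 0) = fun _ : ZMod d => (d:ℝ)⁻¹ := by
    funext a
    simp only [margFst, h00, Finset.sum_ite_eq, Finset.mem_univ, if_true]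
  have hms : margSnd (Pmix d ξ 0 0) = fun _ : ZMod d => (d:ℝ)⁻¹ := by
    funext b
    simp only [margSnd, h00, Finset.sum_ite_eq', Finset.mem_univ, if_true]
  have hmain : CHSHE (Pmix d ξ) = binEnt ξ := by
    unfold CHSHE
    rw [hpe11, hmf, hms, h00, h01, h10, diag_pairEntropy, const_shannonEntropy]
    ring
  refine ⟨hmain, fun h0 h1 => ?_⟩
  rw [hmain]
  have l1 : Real.logb 2 ξ < 0 := Real.logb_neg (by norm_num) h0 h1
  have l2 : Real.logb 2 (1 - ξ) < 0 := Real.logb_neg (by norm_num) (by linarith) (by linarith)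
  unfold binEnt
  nlinarith [mul_pos h0 (neg_pos.mpr l1), mul_pos (by linarith : (0:ℝ) < 1 - ξ) (neg_pos.mpr l2)]
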